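/- Let a ≠ 0, b ∈ ℝ, R ≥ 1, and u0(x) = a·x1·xn + b·xn² on ℝⁿ. Then there exist constants c > 0 and δ > 0, depending only on a, b and R, such that |∇u0(x)| ≥ c for every x in the set D = {x = (x1, x'', xn) : R/2 < |x| < R, |x''| ≤ δ}. -/

import Mathlib

/-!
The two partial derivatives `∂₁u₀ = a xₙ` and `∂ₙu₀ = a x₁ + 2 b xₙ` are an invertible linear
function of `(x₁, xₙ)` (determinant `-a²`), so `|∇u₀|` dominates `|x₁| + |xₙ|` up to a factor
depending only on `a, b`. On the cylinder with `δ = R / 4` the triangle inequality gives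
`|x₁| + |xₙ| ≥ ‖x‖ - |x''| > R / 4`.
-/

open InnerProductSpace

section

variable {ι : Type*} [Fintype ι]

theorem EuclideanSpace.hasFDerivAt_mul_add_sq (a b : ℝ) (i j : ι) (x : EuclideanSpace ℝ ι) :
    HasFDerivAt (fun y : EuclideanSpace ℝ ι => a * y i * y j + b * y j ^ 2)
      (a • (x i • EuclideanSpace.proj j + x j • EuclideanSpace.proj i)
        + b • ((2 * x j) • EuclideanSpace.proj j) : EuclideanSpace ℝ ι →L[ℝ] ℝ) x := by
  have hi := (EuclideanSpace.proj (𝕜 := ℝ) i).hasFDerivAt (x := x)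
  have hj := (EuclideanSpace.proj (𝕜 := ℝ) j).hasFDerivAt (x := x)
  have h := ((hi.mul hj).const_mul a).add ((hj.pow 2).const_mul b)
  refine (h.congr_fderiv ?_).congr_of_eventuallyEq (.of_forall fun y => ?_)
  · simp
  · simp only [Pi.add_apply, Pi.mul_apply, PiLp.proj_apply]; ring

variable [DecidableEq ι]

theorem EuclideanSpace.gradient_apply (f : EuclideanSpace ℝ ι → ℝ)
    (x : EuclideanSpace ℝ ι) (k : ι) :
    gradient f x k = fderiv ℝ f x (EuclideanSpace.single k 1) := by
  rw [← toDual_gradient, toDual_apply_apply, EuclideanSpace.inner_single_right]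
  simp

theorem EuclideanSpace.abs_fderiv_single_le_norm_gradient
    (f : EuclideanSpace ℝ ι → ℝ) (x : EuclideanSpace ℝ ι) (k : ι) :
    |fderiv ℝ f x (EuclideanSpace.single k 1)| ≤ ‖gradient f x‖ := by
  rw [← EuclideanSpace.gradient_apply, ← Real.norm_eq_abs]
  exact PiLp.norm_apply_le _ k

theorem EuclideanSpace.norm_le_abs_add_abs_add_sqrt (x : EuclideanSpace ℝ ι) {i j : ι}
    (hij : i ≠ j) :
    ‖x‖ ≤ |x i| + |x j| + √(∑ k ∈ Finset.univ.filter (fun k => k ≠ i ∧ k ≠ j), x k ^ 2) := by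
  set S := ∑ k ∈ Finset.univ.filter (fun k => k ≠ i ∧ k ≠ j), x k ^ 2
  have hS : 0 ≤ S := Finset.sum_nonneg fun k _ => sq_nonneg _
  have hsplit : ‖x‖ ^ 2 = x i ^ 2 + x j ^ 2 + S := by
    have hpair : Finset.univ.filter (fun k => ¬(k ≠ i ∧ k ≠ j)) = {i, j} := by
      ext k
      simp only [Finset.mem_filter, Finset.mem_univ, true_and, not_and_or, not_ne_iff,
        Finset.mem_insert, Finset.mem_singleton]
    rw [EuclideanSpace.real_norm_sq_eq,
      ← Finset.sum_filter_add_sum_filter_not _ (fun k => k ≠ i ∧ k ≠ j), hpair,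
      Finset.sum_pair hij]
    ring
  refine le_of_sq_le_sq ?_ (by positivity)
  nlinarith [Real.sq_sqrt hS, sq_abs (x i), sq_abs (x j), abs_nonneg (x i),
    abs_nonneg (x j), Real.sqrt_nonneg S]

theorem EuclideanSpace.abs_le_norm_gradient_of_eq_mul_add_sq {a b : ℝ} {i j : ι} (hij : i ≠ j)
    {u : EuclideanSpace ℝ ι → ℝ} (hu : ∀ y, u y = a * y i * y j + b * y j ^ 2)
    (x : EuclideanSpace ℝ ι) :
    |a * x j| ≤ ‖gradient u x‖ ∧ |a * x i + 2 * b * x j| ≤ ‖gradient u x‖ := by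
  have hD := (EuclideanSpace.hasFDerivAt_mul_add_sq a b i j x).fderiv
  rw [← funext hu] at hD
  have hi := EuclideanSpace.abs_fderiv_single_le_norm_gradient u x i
  have hj := EuclideanSpace.abs_fderiv_single_le_norm_gradient u x j
  rw [hD] at hi hj
  simp only [add_apply, smul_apply, PiLp.proj_apply,
    PiLp.single_eq_same, PiLp.single_eq_of_ne, hij, hij.symm, ne_eq, not_false_eq_true,
    smul_eq_mul, mul_zero, mul_one, zero_add, add_zero] at hi hj
  exact ⟨hi, by convert hj using 3; ring⟩

end

theorem sq_mul_abs_add_abs_le {a b p q g : ℝ} (hq : |a * q| ≤ g) (hp : |a * p + 2 * b * q| ≤ g) :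
    a ^ 2 * (|p| + |q|) ≤ 2 * (|a| + |b|) * g := by
  have hap : |a| * |p| ≤ g + 2 * |b| * |q| := by
    calc |a| * |p| = |(a * p + 2 * b * q) - 2 * b * q| := by rw [← abs_mul]; ring_nf
      _ ≤ |a * p + 2 * b * q| + |2 * b * q| := abs_sub _ _
      _ ≤ g + 2 * |b| * |q| := by rw [abs_mul, abs_mul, abs_two]; linarith
  rw [abs_mul] at hq
  rw [← sq_abs a]
  nlinarith [mul_le_mul_of_nonneg_left hap (abs_nonneg a),
    mul_le_mul_of_nonneg_left hq (abs_nonneg a), mul_le_mul_of_nonneg_left hq (abs_nonneg b)]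

/-- nondegeneracy of ∇u0, u0(x) = a·x1·xn + b·xn², a ≠ 0, on the
thin cylinder D = {R/2 < |x| < R, |x''| ≤ δ}, where x'' = (x2, …, x_{n−1}) are
the middle coordinates. -/
theorem stmt17 (n : ℕ) (hn : 2 ≤ n) (a b R : ℝ) (ha : a ≠ 0) (hR : 1 ≤ R)
    (u0 : EuclideanSpace ℝ (Fin n) → ℝ)
    (hu0 : ∀ x, u0 x = a * x ⟨0, by omega⟩ * x ⟨n - 1, by omega⟩
      + b * (x ⟨n - 1, by omega⟩) ^ 2) :
    ∃ c > 0, ∃ δ > 0, ∀ x : EuclideanSpace ℝ (Fin n),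
      R / 2 < ‖x‖ → ‖x‖ < R →
      Real.sqrt (∑ i ∈ Finset.univ.filter
        (fun i : Fin n => i ≠ ⟨0, by omega⟩ ∧ i ≠ ⟨n - 1, by omega⟩),
        (x i) ^ 2) ≤ δ →
      ‖gradient u0 x‖ ≥ c := by
  have hRpos : 0 < R := by linarith
  have hij : (⟨0, by omega⟩ : Fin n) ≠ ⟨n - 1, by omega⟩ := by
    simp only [ne_eq, Fin.mk.injEq]; omega
  refine ⟨a ^ 2 * R / (8 * (|a| + |b|)), by positivity, R / 4, by positivity,
    fun x hRx _ hδ => ?_⟩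
  obtain ⟨hq, hp⟩ := EuclideanSpace.abs_le_norm_gradient_of_eq_mul_add_sq hij hu0 x
  have hpq : R / 4 < |x ⟨0, by omega⟩| + |x ⟨n - 1, by omega⟩| := by
    linarith [EuclideanSpace.norm_le_abs_add_abs_add_sqrt x hij]
  have hgrad := sq_mul_abs_add_abs_le hq hp
  rw [ge_iff_le, div_le_iff₀ (by positivity)]
  nlinarith [mul_le_mul_of_nonneg_left hpq.le (sq_nonneg a)]
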